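/- arXiv:2401.02666 — 2 statements merged into one kernel-verified Lean document; each statement's English description precedes it below -/
import Mathlib

section
/- Let (R, μ) satisfy the pre-processing conditions. If there does not exist a critical hospital with respect to (R, μ), then μ is a stable matching in G such that, for every stable matching σ in G and every doctor d ∈ D, μ(d) ≿_d σ(d). -/
open Classical

variable {D H : Type}

def edgesD (E : Set (D × H)) (d : D) : Set (D × H) := {e ∈ E | e.1 = d}

def edgesH (E : Set (D × H)) (h : H) : Set (D × H) := {e ∈ E | e.2 = h}

def optD (E : Set (D × H)) (d : D) : Set (Option (D × H)) :=
  insert none (some '' edgesD E d)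

def optH (E : Set (D × H)) (h : H) : Set (Option (D × H)) :=
  insert none (some '' edgesH E h)

/-- An instance of the strongly stable matching problem with closures:
a bipartite graph between doctors `D` and hospitals `H` with edge set `E`,
a set `S` of closable hospitals, and for each vertex a transitive, total
preference relation on its incident edges together with `∅` (modelled by
`Option`, where `none` plays the role of `∅`), such that every incident
edge is strictly preferred to `∅`. -/
structure SSMC (D H : Type) where
  E : Set (D × H)
  S : Set H
  prefD : D → Option (D × H) → Option (D × H) → Prop
  prefH : H → Option (D × H) → Option (D × H) → Prop
  prefD_trans : ∀ d, ∀ e ∈ optD E d, ∀ f ∈ optD E d, ∀ g ∈ optD E d,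
    prefD d e f → prefD d f g → prefD d e g
  prefD_total : ∀ d, ∀ e ∈ optD E d, ∀ f ∈ optD E d, prefD d e f ∨ prefD d f e
  prefD_none : ∀ d, ∀ e ∈ edgesD E d, prefD d (some e) none ∧ ¬ prefD d none (some e)
  prefH_trans : ∀ h, ∀ e ∈ optH E h, ∀ f ∈ optH E h, ∀ g ∈ optH E h,
    prefH h e f → prefH h f g → prefH h e g
  prefH_total : ∀ h, ∀ e ∈ optH E h, ∀ f ∈ optH E h, prefH h e f ∨ prefH h f e
  prefH_none : ∀ h, ∀ e ∈ edgesH E h, prefH h (some e) none ∧ ¬ prefH h none (some e)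

namespace SSMC

variable (I : SSMC D H)

/-- `e ≻_d f` -/
def strictD (d : D) (e f : Option (D × H)) : Prop := I.prefD d e f ∧ ¬ I.prefD d f e

/-- `e ∼_d f` -/
def simD (d : D) (e f : Option (D × H)) : Prop := I.prefD d e f ∧ I.prefD d f e

/-- `e ≻_h f` -/
def strictH (h : H) (e f : Option (D × H)) : Prop := I.prefH h e f ∧ ¬ I.prefH h f e

/-- `e ∼_h f` -/
def simH (h : H) (e f : Option (D × H)) : Prop := I.prefH h e f ∧ I.prefH h f e

/-- A matching: a subset of `E` with at most one edge at each vertex. -/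
def isMatching (μ : Set (D × H)) : Prop :=
  μ ⊆ I.E ∧ (∀ e ∈ μ, ∀ f ∈ μ, e.1 = f.1 → e = f) ∧
    (∀ e ∈ μ, ∀ f ∈ μ, e.2 = f.2 → e = f)

end SSMC

/-- `μ(d)`: the edge of `μ` at doctor `d` (or `none`). -/
noncomputable def muD (μ : Set (D × H)) (d : D) : Option (D × H) :=
  if h : ∃ e, e ∈ μ ∧ e.1 = d then some h.choose else none

/-- `μ(h)`: the edge of `μ` at hospital `h` (or `none`). -/
noncomputable def muH (μ : Set (D × H)) (h : H) : Option (D × H) :=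
  if hh : ∃ e, e ∈ μ ∧ e.2 = h then some hh.choose else none

namespace SSMC

variable (I : SSMC D H)

/-- `e` blocks the matching `μ`: `e ∈ E \ μ`, `e` weakly blocks `μ` on both of its
endpoints and strongly blocks `μ` on at least one of them (where blocking on a
hospital `h ∈ S` additionally requires `μ(h) ≠ ∅`). -/
def blocks (μ : Set (D × H)) (e : D × H) : Prop :=
  e ∈ I.E ∧ e ∉ μ ∧
  I.prefD e.1 (some e) (muD μ e.1) ∧
  (I.prefH e.2 (some e) (muH μ e.2) ∧ (e.2 ∈ I.S → muH μ e.2 ≠ none)) ∧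
  (I.strictD e.1 (some e) (muD μ e.1) ∨
    (I.strictH e.2 (some e) (muH μ e.2) ∧ (e.2 ∈ I.S → muH μ e.2 ≠ none)))

/-- A stable matching: no edge blocks it. -/
def stable (μ : Set (D × H)) : Prop :=
  I.isMatching μ ∧ ∀ e, ¬ I.blocks μ e

/-- `Ch_D(F)`: union over doctors `d` of the most preferred edges of `F(d)`. -/
def ChD (F : Set (D × H)) : Set (D × H) :=
  {e ∈ F | ∀ f ∈ F, f.1 = e.1 → I.prefD e.1 (some e) (some f)}

/-- `Ch_H(F)`: union over hospitals `h` of the most preferred edges of `F(h)`. -/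
def ChH (F : Set (D × H)) : Set (D × H) :=
  {e ∈ F | ∀ f ∈ F, f.2 = e.2 → I.prefH e.2 (some e) (some f)}

/-- `Ch(F) = Ch_H(Ch_D(F))`. -/
def Ch (F : Set (D × H)) : Set (D × H) := I.ChH (I.ChD F)

/-- `e ≻_d F` for a flat set `F`. -/
def dSucc (F : Set (D × H)) (e : D × H) : Prop :=
  (∀ f ∈ F, f.1 ≠ e.1) ∨ ∃ f ∈ F, f.1 = e.1 ∧ I.strictD e.1 (some e) (some f)

/-- `e ∼_d F` for a flat set `F`. -/
def dSim (F : Set (D × H)) (e : D × H) : Prop :=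
  ∃ f ∈ F, f.1 = e.1 ∧ I.simD e.1 (some e) (some f)

/-- `block(F)` for a flat set `F ⊆ E`. -/
def setBlock (F : Set (D × H)) : Set (D × H) :=
  {e | e ∈ I.E ∧ e ∉ F ∧ (∃ f ∈ F, f.2 = e.2) ∧
    (I.dSucc F e ∨ I.dSim F e) ∧
    (I.dSucc F e → ∃ f ∈ F, f.2 = e.2 ∧ I.prefH e.2 (some e) (some f)) ∧
    (I.dSim F e → ∃ f ∈ F, f.2 = e.2 ∧ I.strictH e.2 (some e) (some f))}

/-- `L = Ch(E \ R)`. -/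
def Lset (R : Set (D × H)) : Set (D × H) := I.Ch (I.E \ R)

/-- The pre-processing conditions (R1)–(R5) on a pair `(R, μ)`. -/
def preproc (R μ : Set (D × H)) : Prop :=
  R ⊆ I.E ∧ I.isMatching μ ∧
  -- (R1)
  (∀ σ, I.stable σ → ∀ e ∈ R, e ∉ σ) ∧
  -- (R2)
  μ ⊆ I.Ch (I.E \ R) ∧
  -- (R3)
  (∀ d : D, (∃ e ∈ I.E \ R, e.1 = d) → ∃ e ∈ μ, e.1 = d) ∧
  -- (R4)
  R ∩ I.setBlock (I.Ch (I.E \ R)) = ∅ ∧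
  -- (R5)
  (∀ d : D, ∀ e ∈ R, e.1 = d → ∀ f ∈ I.E \ R, f.1 = d → I.prefD d (some e) (some f))

/-- `h` is a critical hospital with respect to `(R, μ)`. -/
def critical (R μ : Set (D × H)) (h : H) : Prop :=
  h ∉ I.S ∧ (∀ e ∈ μ, e.2 ≠ h) ∧
  ((∃ e ∈ I.Ch (I.E \ R), e.2 = h) ∨ (∃ e ∈ R, e.2 = h))

/-- Assumption (★): every doctor strictly prefers any acceptable hospital
outside `S` to any acceptable hospital in `S`. -/
def starAssumption : Prop :=
  ∀ (d : D) (h h' : H), (d, h) ∈ I.E → (d, h') ∈ I.E → h ∈ I.S → h' ∉ I.S →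
    I.strictD d (some (d, h')) (some (d, h))

end SSMC

/-!
Every doctor with an edge outside `R` is matched by `μ` to one of their best such edges
((R2), (R3)), while a stable matching uses no edge of `R` (R1); this gives the doctor-optimality
of `μ`. Suppose `e = (d, h)` blocks `μ`. If `e ∉ R`, then `e` ties with `μ(d)`, so
`e ∈ Ch_D(E \ R)` and `e` must block strictly at `h`: a partner `μ(h) ∈ Ch(E \ R)` is at least as
good as `e` for `h`, and if `h` is unmatched then `h ∉ S` and, `D` being finite, `Ch(E \ R)` has an
edge at `h`, so `h` would be critical. If `e ∈ R`, then `h` is matched (else it is critical through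
`R(h) ≠ ∅`), `e` is weakly better for `d` than every edge of `Ch(E \ R)` at `d` by (R5), and the
blocking conditions say exactly that `e ∈ block(Ch(E \ R))`, contradicting (R4).
-/

theorem Set.Finite.exists_forall_rel_of_total {α : Type*} {r : α → α → Prop} {s : Set α}
    (hs : s.Finite) (hne : s.Nonempty) (htot : ∀ a ∈ s, ∀ b ∈ s, r a b ∨ r b a)
    (htrans : ∀ a ∈ s, ∀ b ∈ s, ∀ c ∈ s, r a b → r b c → r a c) :
    ∃ m ∈ s, ∀ x ∈ s, r m x := by
  refine Set.Finite.induction_on_subset (motive := fun t _ => t.Nonempty → ∃ m ∈ t, ∀ x ∈ t, r m x)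
    s hs (fun h => absurd h Set.not_nonempty_empty) ?_ hne
  intro a t has hts _ ih _
  have hrefl : r a a := (htot a has a has).elim id id
  rcases t.eq_empty_or_nonempty with rfl | htne
  · exact ⟨a, Set.mem_insert a _, by simpa using hrefl⟩
  obtain ⟨m, hm, hmax⟩ := ih htne
  rcases htot m (hts hm) a has with hma | ham
  · refine ⟨m, Set.mem_insert_of_mem a hm, ?_⟩
    rintro x (rfl | hx)
    exacts [hma, hmax x hx]
  · refine ⟨a, Set.mem_insert a t, ?_⟩
    rintro x (rfl | hx)
    exacts [hrefl, htrans a has m (hts hm) x (hts hx) ham (hmax x hx)]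

section Assignment

variable {μ : Set (D × H)} {d : D} {h : H} {e : D × H}

theorem muD_eq_none_iff : muD μ d = none ↔ ∀ e ∈ μ, e.1 ≠ d := by
  unfold muD
  split_ifs with hex
  · exact iff_of_false not_false fun hall => hall _ hex.choose_spec.1 hex.choose_spec.2
  · exact iff_of_true rfl fun e he hed => hex ⟨e, he, hed⟩

theorem muH_eq_none_iff : muH μ h = none ↔ ∀ e ∈ μ, e.2 ≠ h := by
  unfold muH
  split_ifs with hex
  · exact iff_of_false not_false fun hall => hall _ hex.choose_spec.1 hex.choose_spec.2
  · exact iff_of_true rfl fun e he hed => hex ⟨e, he, hed⟩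

theorem mem_of_muD_eq_some (he : muD μ d = some e) : e ∈ μ ∧ e.1 = d := by
  unfold muD at he
  split_ifs at he with hex
  exact Option.some.inj he ▸ hex.choose_spec

theorem mem_of_muH_eq_some (he : muH μ h = some e) : e ∈ μ ∧ e.2 = h := by
  unfold muH at he
  split_ifs at he with hex
  exact Option.some.inj he ▸ hex.choose_spec

theorem some_mem_optD {E : Set (D × H)} (he : e ∈ E) (hd : e.1 = d) : some e ∈ optD E d :=
  Set.mem_insert_of_mem _ ⟨e, ⟨he, hd⟩, rfl⟩

theorem some_mem_optH {E : Set (D × H)} (he : e ∈ E) (hh : e.2 = h) : some e ∈ optH E h :=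
  Set.mem_insert_of_mem _ ⟨e, ⟨he, hh⟩, rfl⟩

theorem muD_mem_optD {E : Set (D × H)} (hμ : μ ⊆ E) (d : D) : muD μ d ∈ optD E d := by
  cases hd : muD μ d with
  | none => exact Set.mem_insert _ _
  | some e =>
    obtain ⟨he, rfl⟩ := mem_of_muD_eq_some hd
    exact some_mem_optD (hμ he) rfl

end Assignment

namespace SSMC

variable (I : SSMC D H)

theorem prefD_none_of_mem_optD {d : D} {x : Option (D × H)} (hx : x ∈ optD I.E d) :
    I.prefD d x none := by
  rcases hx with rfl | ⟨e, he, rfl⟩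
  · exact (I.prefD_total d none (Set.mem_insert _ _) none (Set.mem_insert _ _)).elim id id
  · exact (I.prefD_none d e he).1

theorem Ch_subset (F : Set (D × H)) : I.Ch F ⊆ F := fun _ he => he.1.1

theorem exists_mem_ChH [Finite D] {F : Set (D × H)} (hF : F ⊆ I.E) {e : D × H} (he : e ∈ F) :
    ∃ f ∈ I.ChH F, f.2 = e.2 := by
  have hfin : {f ∈ F | f.2 = e.2}.Finite :=
    (Set.finite_range fun d : D => (d, e.2)).subset fun f hf => ⟨f.1, Prod.ext rfl hf.2.symm⟩
  have hopt : ∀ f ∈ {f ∈ F | f.2 = e.2}, some f ∈ optH I.E e.2 :=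
    fun f hf => some_mem_optH (hF hf.1) hf.2
  obtain ⟨m, ⟨hmF, hm2⟩, hmax⟩ := hfin.exists_forall_rel_of_total
    (r := fun a b => I.prefH e.2 (some a) (some b)) ⟨e, he, rfl⟩
    (fun a ha b hb => I.prefH_total e.2 _ (hopt a ha) _ (hopt b hb))
    (fun a ha b hb c hc => I.prefH_trans e.2 _ (hopt a ha) _ (hopt b hb) _ (hopt c hc))
  refine ⟨m, ⟨hmF, fun f hf hfm => ?_⟩, hm2⟩
  rw [hm2]
  exact hmax f ⟨hf, hfm.trans hm2⟩

variable {I} {R μ : Set (D × H)}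

theorem muH_ne_none_of_blocks_of_not_critical (hnc : ¬ ∃ h, I.critical R μ h) {e : D × H}
    (hb : I.blocks μ e) (hedge : (∃ f ∈ I.Ch (I.E \ R), f.2 = e.2) ∨ ∃ f ∈ R, f.2 = e.2) :
    muH μ e.2 ≠ none := fun hnone =>
  hnc ⟨e.2, fun hS => hb.2.2.2.1.2 hS hnone, muH_eq_none_iff.1 hnone, hedge⟩

namespace preproc

theorem prefD_muD (hpre : I.preproc R μ) {f : D × H} (hf : f ∈ I.E \ R) :
    I.prefD f.1 (muD μ f.1) (some f) := by
  obtain ⟨-, -, -, hR2, hR3, -⟩ := hpre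
  obtain ⟨m, hm⟩ := Option.ne_none_iff_exists'.1 fun hnone => by
    obtain ⟨m, hmμ, hm1⟩ := hR3 f.1 ⟨f, hf, rfl⟩
    exact muD_eq_none_iff.1 hnone m hmμ hm1
  obtain ⟨hmμ, hm1⟩ := mem_of_muD_eq_some hm
  rw [hm, ← hm1]
  exact (hR2 hmμ).1.2 f hf hm1.symm

theorem prefD_muD_of_stable (hpre : I.preproc R μ) {σ : Set (D × H)} (hσ : I.stable σ) (d : D) :
    I.prefD d (muD μ d) (muD σ d) := by
  have ⟨_, ⟨hμE, _⟩, hR1, _⟩ := hpre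
  cases hs : muD σ d with
  | none => exact I.prefD_none_of_mem_optD (muD_mem_optD hμE d)
  | some s =>
    obtain ⟨hsσ, rfl⟩ := mem_of_muD_eq_some hs
    exact hpre.prefD_muD ⟨hσ.1.1 hsσ, fun hsR => hR1 σ hσ s hsR hsσ⟩

theorem not_blocks_of_notMem [Finite D] (hpre : I.preproc R μ) (hnc : ¬ ∃ h, I.critical R μ h)
    {e : D × H} (heR : e ∉ R) : ¬ I.blocks μ e := by
  intro hb
  have ⟨_, ⟨hμE, _⟩, _, hR2, _⟩ := hpre
  have ⟨heE, _, hwd, _, hstrong⟩ := hb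
  have heER : e ∈ I.E \ R := ⟨heE, heR⟩
  have heChD : e ∈ I.ChD (I.E \ R) := by
    refine ⟨heER, fun f hf hfe => ?_⟩
    have hμf : I.prefD e.1 (muD μ e.1) (some f) := by
      rw [← hfe]
      exact hpre.prefD_muD hf
    exact I.prefD_trans e.1 _ (some_mem_optD heE rfl) _ (muD_mem_optD hμE _) _
      (some_mem_optD hf.1 hfe) hwd hμf
  obtain ⟨m, hm⟩ := Option.ne_none_iff_exists'.1 <| muH_ne_none_of_blocks_of_not_critical hnc hb
    (Or.inl (I.exists_mem_ChH (fun _ hf => hf.1.1) heChD))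
  obtain ⟨hmμ, hm2⟩ := mem_of_muH_eq_some hm
  have hme : I.prefH e.2 (some m) (some e) := by
    rw [← hm2]
    exact (hR2 hmμ).2 e heChD hm2.symm
  rcases hstrong with hd | ⟨hh, -⟩
  · exact hd.2 (hpre.prefD_muD heER)
  · rw [hm] at hh
    exact hh.2 hme

theorem mem_setBlock_of_blocks (hpre : I.preproc R μ) {e : D × H} (heR : e ∈ R)
    (hb : I.blocks μ e) {m : D × H} (hm : muH μ e.2 = some m) :
    e ∈ I.setBlock (I.Ch (I.E \ R)) := by
  have ⟨_, ⟨hμE, _⟩, _, hR2, _, _, hR5⟩ := hpre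
  obtain ⟨heE, -, -, ⟨hwh, -⟩, hstrong⟩ := hb
  obtain ⟨hmμ, hm2⟩ := mem_of_muH_eq_some hm
  have hmL : m ∈ I.Ch (I.E \ R) := hR2 hmμ
  rw [hm] at hwh hstrong
  refine ⟨heE, fun heL => (I.Ch_subset _ heL).2 heR, ⟨m, hmL, hm2⟩, ?_,
    fun _ => ⟨m, hmL, hm2, hwh⟩, ?_⟩
  · by_cases hLd : ∃ f ∈ I.Ch (I.E \ R), f.1 = e.1
    · obtain ⟨f, hfL, hf1⟩ := hLd
      have hef := hR5 e.1 e heR rfl f (I.Ch_subset _ hfL) hf1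
      by_cases hfe : I.prefD e.1 (some f) (some e)
      · exact Or.inr ⟨f, hfL, hf1, hef, hfe⟩
      · exact Or.inl (Or.inr ⟨f, hfL, hf1, hef, hfe⟩)
    · exact Or.inl (Or.inl fun f hfL hf1 => hLd ⟨f, hfL, hf1⟩)
  · rintro ⟨f, hfL, hf1, -, hfe⟩
    have hfER := I.Ch_subset _ hfL
    have hμf : I.prefD e.1 (muD μ e.1) (some f) := by
      rw [← hf1]
      exact hpre.prefD_muD hfER
    have hμe : I.prefD e.1 (muD μ e.1) (some e) := I.prefD_trans e.1 _ (muD_mem_optD hμE _) _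
      (some_mem_optD hfER.1 hf1) _ (some_mem_optD heE rfl) hμf hfe
    exact ⟨m, hmL, hm2, (hstrong.resolve_left fun hd => hd.2 hμe).1⟩

theorem not_blocks_of_mem (hpre : I.preproc R μ) (hnc : ¬ ∃ h, I.critical R μ h) {e : D × H}
    (heR : e ∈ R) : ¬ I.blocks μ e := by
  intro hb
  have ⟨_, _, _, _, _, hR4, _⟩ := hpre
  obtain ⟨m, hm⟩ := Option.ne_none_iff_exists'.1 <|
    muH_ne_none_of_blocks_of_not_critical hnc hb (Or.inr ⟨e, heR, rfl⟩)
  exact Set.eq_empty_iff_forall_notMem.1 hR4 e ⟨heR, hpre.mem_setBlock_of_blocks heR hb hm⟩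

theorem stable_of_not_critical [Finite D] (hpre : I.preproc R μ)
    (hnc : ¬ ∃ h, I.critical R μ h) : I.stable μ := by
  refine ⟨hpre.2.1, fun e => ?_⟩
  by_cases heR : e ∈ R
  · exact hpre.not_blocks_of_mem hnc heR
  · exact hpre.not_blocks_of_notMem hnc heR

end preproc

end SSMC

theorem no_critical_implies_stable_general {D H : Type} [Fintype D]
    (I : SSMC D H) (R μ : Set (D × H)) (hpre : I.preproc R μ)
    (hnc : ¬ ∃ h : H, I.critical R μ h) :
    I.stable μ ∧
      ∀ σ : Set (D × H), I.stable σ → ∀ d : D, I.prefD d (muD μ d) (muD σ d) :=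
  ⟨hpre.stable_of_not_critical hnc, fun _ hσ d => hpre.prefD_muD_of_stable hσ d⟩

/-- Lemma: no critical hospital: if `(R, μ)` satisfies the
pre-processing conditions and there is no critical hospital with respect to
`(R, μ)`, then `μ` is stable and every doctor weakly prefers `μ` to any
stable matching. -/
theorem no_critical_implies_stable {D H : Type} [Fintype D] [Fintype H]
    (I : SSMC D H) (R μ : Set (D × H)) (hpre : I.preproc R μ)
    (hnc : ¬ ∃ h : H, I.critical R μ h) :
    I.stable μ ∧
      ∀ σ : Set (D × H), I.stable σ → ∀ d : D, I.prefD d (muD μ d) (muD σ d) :=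
  no_critical_implies_stable_general I R μ hpre hnc
end

section
/- In the bounded-degree setting, for every X ∈ Q the following hold: (i) |L(d)| = 2 for every doctor d ∈ D_X, and (ii) |H_X| = |D_X| + 1. -/
open Classical

variable {D H : Type}

/-- Adjacency relation on `D ⊕ H` induced by an edge set `L`. -/
def adjRel (L : Set (D × H)) : (D ⊕ H) → (D ⊕ H) → Prop
  | Sum.inl d, Sum.inr h => (d, h) ∈ L
  | Sum.inr h, Sum.inl d => (d, h) ∈ L
  | _, _ => False

/-- `X` is a connected component of the bipartite graph `(D, H; L)`. -/
def isComponent (L : Set (D × H)) (X : Set (D ⊕ H)) : Prop :=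
  ∃ v ∈ X, X = {w | Relation.ReflTransGen (adjRel L) v w}

/-- `D_X`: the doctors in `X`. -/
def Dside (X : Set (D ⊕ H)) : Set D := {d | Sum.inl d ∈ X}

/-- `H_X`: the hospitals in `X`. -/
def Hside (X : Set (D ⊕ H)) : Set H := {h | Sum.inr h ∈ X}

namespace SSMC

variable (I : SSMC D H)

/-- `Leaf_L(D_X)`: the doctors of `X` incident to exactly one edge of `L = Ch(E \ R)`. -/
def leafSet (R : Set (D × H)) (X : Set (D ⊕ H)) : Set D :=
  {d ∈ Dside X | (edgesD (I.Lset R) d).ncard = 1}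

/-- `X ∈ 𝓒`: connected component of `G* = (D, H; Ch(E \ R))` with at least two vertices. -/
def memC (R : Set (D × H)) (X : Set (D ⊕ H)) : Prop :=
  isComponent (I.Lset R) X ∧ 2 ≤ X.ncard

/-- `X ∈ 𝓟`. -/
def memP (R : Set (D × H)) (X : Set (D ⊕ H)) : Prop :=
  I.memC R X ∧ (Dside X).ncard = (Hside X).ncard

/-- `X ∈ 𝓠`. -/
def memQ (R : Set (D × H)) (X : Set (D ⊕ H)) : Prop :=
  I.memC R X ∧ (Dside X).ncard < (Hside X).ncard

/-- `X ∈ 𝓟*`. -/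
def memPstar (R : Set (D × H)) (X : Set (D ⊕ H)) : Prop :=
  I.memP R X ∧ (I.leafSet R X).ncard = 1

/-- `X ∈ 𝓡`: a component consisting of a single hospital `h ∈ H \ S` with `R(h) ≠ ∅`. -/
def memRcal (R : Set (D × H)) (X : Set (D ⊕ H)) : Prop :=
  isComponent (I.Lset R) X ∧
    ∃ h : H, X = {Sum.inr h} ∧ h ∉ I.S ∧ ∃ e ∈ R, e.2 = h

end SSMC

/-!
A component `X` of `G*` is connected, so it has at least `|X| - 1` edges. Every edge of `G*` has
exactly one endpoint in `D`, and each doctor has at most two edges, so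
`|D_X| + |H_X| - 1 ≤ ∑_{d ∈ D_X} |L(d)| ≤ 2 |D_X|`. Since `|D_X| < |H_X|`, both inequalities are
equalities.
-/

open SimpleGraph

lemma finite_edgesD [Finite H] (E : Set (D × H)) (d : D) : (edgesD E d).Finite :=
  (Set.finite_range (Prod.mk d)).subset fun e he => ⟨e.2, by rw [← he.2]⟩

lemma SSMC.ncard_edgesD_Lset_le (I : SSMC D H) [Finite H] (R : Set (D × H)) (d : D) :
    (edgesD (I.Lset R) d).ncard ≤ (edgesD I.E d).ncard :=
  Set.ncard_le_ncard (fun _ he => ⟨he.1.1.1.1, he.2⟩) (finite_edgesD I.E d)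

lemma ncard_eq_ncard_Dside_add_ncard_Hside {X : Set (D ⊕ H)} (hX : X.Finite) :
    X.ncard = (Dside X).ncard + (Hside X).ncard := by
  obtain ⟨hD, hH⟩ := Set.finite_preimage_inl_and_inr.mpr hX
  conv_lhs => rw [← Set.image_preimage_inl_union_image_preimage_inr X]
  rw [Set.ncard_union_eq (Set.disjoint_left.mpr (by simp)) (hD.image _) (hH.image _),
    Set.ncard_image_of_injective _ Sum.inl_injective,
    Set.ncard_image_of_injective _ Sum.inr_injective]
  rfl

lemma ncard_setOf_fst_mem_le_sum (L : Set (D × H)) (A : Finset D) :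
    {e ∈ L | e.1 ∈ A}.ncard ≤ ∑ d ∈ A, (edgesD L d).ncard := by
  have hunion : {e ∈ L | e.1 ∈ A} = ⋃ d ∈ A, edgesD L d := by
    ext e
    simp [edgesD, and_comm]
  rw [hunion]
  exact A.set_ncard_biUnion_le _

def graphOf (L : Set (D × H)) : SimpleGraph (D ⊕ H) where
  Adj := adjRel L
  symm := ⟨by rintro (d | h) (d' | h') hadj <;> simp_all [adjRel]⟩
  loopless := ⟨by rintro (d | h) hadj <;> simp_all [adjRel]⟩

lemma isComponent.exists_supp_eq {L : Set (D × H)} {X : Set (D ⊕ H)} (hX : isComponent L X) :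
    ∃ C : (graphOf L).ConnectedComponent, C.supp = X := by
  obtain ⟨v, -, rfl⟩ := hX
  refine ⟨(graphOf L).connectedComponentMk v, Set.ext fun w => ?_⟩
  rw [ConnectedComponent.mem_supp_iff, ConnectedComponent.eq, reachable_comm,
    reachable_iff_reflTransGen]
  rfl

namespace SimpleGraph.ConnectedComponent

variable {L : Set (D × H)} (C : (graphOf L).ConnectedComponent)

lemma card_edgeSet_toSimpleGraph_le (hC : {e ∈ L | Sum.inl e.1 ∈ C.supp}.Finite) :
    Nat.card C.toSimpleGraph.edgeSet ≤ {e ∈ L | Sum.inl e.1 ∈ C.supp}.ncard := by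
  have := hC.to_subtype
  rw [← Nat.card_coe_set_eq]
  refine Nat.card_le_card_of_surjective (fun e => ⟨s(⟨Sum.inl e.1.1, e.2.2⟩,
    ⟨Sum.inr e.1.2, C.mem_supp_of_adj_mem_supp e.2.2 e.2.1⟩), e.2.1⟩) ?_
  rintro ⟨z, hz⟩
  induction z using Sym2.ind with
  | h a b =>
    have hab : adjRel L a.1 b.1 := hz
    rcases a with ⟨d | h, ha⟩ <;> rcases b with ⟨d' | h', hb⟩ <;> simp only [adjRel] at hab
    · exact ⟨⟨(d, h'), hab, ha⟩, rfl⟩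
    · exact ⟨⟨(d', h), hab, hb⟩, Subtype.ext Sym2.eq_swap⟩

lemma ncard_supp_le_sum_ncard_edgesD_add_one (hC : C.supp.Finite) (A : Finset D)
    (hA : (A : Set D) = Dside C.supp) :
    C.supp.ncard ≤ ∑ d ∈ A, (edgesD L d).ncard + 1 := by
  have hLC : {e ∈ L | Sum.inl e.1 ∈ C.supp} = {e ∈ L | e.1 ∈ A} := by
    simp only [← Finset.mem_coe, hA]
    rfl
  have hLC_fin : {e ∈ L | Sum.inl e.1 ∈ C.supp}.Finite := by
    obtain ⟨hD, hH⟩ := Set.finite_preimage_inl_and_inr.mpr hC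
    exact (hD.prod hH).subset fun e he => ⟨he.2, C.mem_supp_of_adj_mem_supp he.2 he.1⟩
  calc C.supp.ncard = Nat.card C.supp := (Nat.card_coe_set_eq _).symm
    _ ≤ Nat.card C.toSimpleGraph.edgeSet + 1 :=
      C.connected_toSimpleGraph.card_vert_le_card_edgeSet_add_one
    _ ≤ {e ∈ L | e.1 ∈ A}.ncard + 1 := by
      rw [← hLC]
      exact Nat.add_le_add_right (C.card_edgeSet_toSimpleGraph_le hLC_fin) 1
    _ ≤ ∑ d ∈ A, (edgesD L d).ncard + 1 :=
      Nat.add_le_add_right (ncard_setOf_fst_mem_le_sum L A) 1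

end SimpleGraph.ConnectedComponent

theorem memQ_structure_general {D H : Type} [Fintype H]
    (I : SSMC D H) (hdeg : ∀ d : D, (edgesD I.E d).ncard ≤ 2)
    (R : Set (D × H))
    (X : Set (D ⊕ H)) (hX : I.memQ R X) :
    (∀ d ∈ Dside X, (edgesD (I.Lset R) d).ncard = 2) ∧
      (Hside X).ncard = (Dside X).ncard + 1 := by
  obtain ⟨⟨hcomp, hcard⟩, hlt⟩ := hX
  obtain ⟨C, rfl⟩ := hcomp.exists_supp_eq
  have hfin : C.supp.Finite := Set.finite_of_ncard_pos (by omega)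
  have hD : (Dside C.supp).Finite := hfin.preimage Sum.inl_injective.injOn
  have hdegL d : (edgesD (I.Lset R) d).ncard ≤ 2 := (I.ncard_edgesD_Lset_le R d).trans (hdeg d)
  have hcount := C.ncard_supp_le_sum_ncard_edgesD_add_one hfin hD.toFinset hD.coe_toFinset
  have hsum_le : ∑ d ∈ hD.toFinset, (edgesD (I.Lset R) d).ncard ≤ ∑ _d ∈ hD.toFinset, 2 :=
    Finset.sum_le_sum fun d _ => hdegL d
  have htwo : ∑ _d ∈ hD.toFinset, 2 = (Dside C.supp).ncard * 2 := by
    rw [Finset.sum_const, smul_eq_mul, ← Set.ncard_eq_toFinset_card _ hD]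
  rw [ncard_eq_ncard_Dside_add_ncard_Hside hfin] at hcount
  have hsum_eq : ∑ d ∈ hD.toFinset, (edgesD (I.Lset R) d).ncard = ∑ _d ∈ hD.toFinset, 2 := by
    omega
  exact ⟨fun d hd => (Finset.sum_eq_sum_iff_of_le fun d _ => hdegL d).mp hsum_eq d
    (hD.mem_toFinset.mpr hd), by omega⟩

/-- in the bounded-degree setting, every `X ∈ 𝓠` satisfies
(i) `|L(d)| = 2` for every doctor `d ∈ D_X`, and (ii) `|H_X| = |D_X| + 1`. -/
theorem memQ_structure {D H : Type} [Fintype D] [Fintype H]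
    (I : SSMC D H) (hdeg : ∀ d : D, (edgesD I.E d).ncard ≤ 2)
    (R μ : Set (D × H)) (hpre : I.preproc R μ)
    (X : Set (D ⊕ H)) (hX : I.memQ R X) :
    (∀ d ∈ Dside X, (edgesD (I.Lset R) d).ncard = 2) ∧
      (Hside X).ncard = (Dside X).ncard + 1 :=
  memQ_structure_general I hdeg R X hX
end
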